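/- arXiv:math/0611455 — 6 statements merged into one kernel-verified Lean document; each statement's English description precedes it below -/
import Mathlib

section
/- Let L be a finite bounded lattice and α : L → L a bijection whose permutation matrix A satisfies: A ≥ 0, Aᵀ = A, A·𝟙 = 𝟙, A ζ = ζᵀ A, and trace(ζᵀζ A) = n, where n = |L|. Then α is a complementation on L: it is an order-reversing involution with p ∧ α(p) = 0 for all p. -/
open Matrix

/-- A bijection whose permutation matrix lies in the polytope of precomplements is
a complementation. -/
theorem complementation_of_perm_matrix_in_polytope {L : Type*} [Fintype L] [DecidableEq L]
    [Lattice L] [BoundedOrder L] [DecidableRel ((· ≤ ·) : L → L → Prop)] (α : L → L)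
    (hbij : Function.Bijective α)
    (hpos : ∀ p q : L, 0 ≤ (Matrix.of fun p q : L => if q = α p then (1 : ℝ) else 0) p q)
    (hsymm : (Matrix.of fun p q : L => if q = α p then (1 : ℝ) else 0)ᵀ =
             (Matrix.of fun p q : L => if q = α p then (1 : ℝ) else 0))
    (hrow : (Matrix.of fun p q : L => if q = α p then (1 : ℝ) else 0) *ᵥ (fun _ => 1) =
            fun _ => 1)
    (hcomm : (Matrix.of fun p q : L => if q = α p then (1 : ℝ) else 0) *
              (Matrix.of fun p q : L => if p ≤ q then (1 : ℝ) else 0) =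
            (Matrix.of fun p q : L => if p ≤ q then (1 : ℝ) else 0)ᵀ *
              (Matrix.of fun p q : L => if q = α p then (1 : ℝ) else 0))
    (htr : Matrix.trace
        ((Matrix.of fun p q : L => if p ≤ q then (1 : ℝ) else 0)ᵀ *
         (Matrix.of fun p q : L => if p ≤ q then (1 : ℝ) else 0) *
         (Matrix.of fun p q : L => if q = α p then (1 : ℝ) else 0)) = (Fintype.card L : ℝ)) :
    (∀ p q : L, p ≤ q → α q ≤ α p) ∧ (∀ p : L, α (α p) = p) ∧ (∀ p : L, p ⊓ α p = ⊥) := by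
  have hinv : ∀ p, α (α p) = p := by
    intro p
    have h := congrFun (congrFun hsymm (α p)) p
    simp only [Matrix.transpose_apply, Matrix.of_apply] at h
    by_contra hne
    rw [if_pos trivial, if_neg (fun he => hne he.symm)] at h
    exact one_ne_zero h
  have hiff : ∀ p q : L, α p ≤ q ↔ α q ≤ p := by
    intro p q
    have h := congrFun (congrFun hcomm p) q
    simp only [Matrix.mul_apply, Matrix.of_apply, Matrix.transpose_apply, ite_mul, mul_ite,
      one_mul, mul_one, zero_mul, mul_zero] at h
    have l1 : (∑ x : L, if x ≤ q then if x = α p then (1 : ℝ) else 0 else 0)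
        = if α p ≤ q then 1 else 0 := by
      rw [Finset.sum_eq_single (α p) (fun b _ hb => by simp [hb]) (by simp)]
      simp
    have l2 : (∑ x : L, if q = α x then if x ≤ p then (1 : ℝ) else 0 else 0)
        = if α q ≤ p then 1 else 0 := by
      rw [Finset.sum_eq_single (α q) (fun b _ hb => by
        rw [if_neg (fun he => hb (by rw [he, hinv]))]) (by simp)]
      rw [if_pos (hinv q).symm]
    rw [l1, l2] at h
    constructor
    · intro h1; by_contra h2; rw [if_pos h1, if_neg h2] at h; exact one_ne_zero h
    · intro h2; by_contra h1; rw [if_neg h1, if_pos h2] at h; exact zero_ne_one h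
  have htr' : ∑ p : L, (∑ s : L, if s ≤ p ∧ s ≤ α p then (1 : ℝ) else 0)
      = (Fintype.card L : ℝ) := by
    rw [← htr]
    simp only [Matrix.trace, Matrix.diag, Matrix.mul_apply, Matrix.of_apply,
      Matrix.transpose_apply]
    refine Finset.sum_congr rfl fun p _ => ?_
    symm
    rw [Finset.sum_eq_single (α p) (fun b _ hb => by
        rw [if_neg (fun he => hb (by rw [he, hinv])), mul_zero])
      (by simp)]
    rw [if_pos (hinv p).symm, mul_one]
    refine Finset.sum_congr rfl fun s _ => ?_
    by_cases h1 : s ≤ p <;> by_cases h2 : s ≤ α p <;> simp [h1, h2]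
  have hone : ∀ p : L, (∑ s : L, if s ≤ p ∧ s ≤ α p then (1 : ℝ) else 0) = 1 := by
    have hle : ∀ p ∈ Finset.univ, (1 : ℝ) ≤ ∑ s : L, if s ≤ p ∧ s ≤ α p then (1 : ℝ) else 0 := by
      intro p _
      have := Finset.single_le_sum
        (f := fun s : L => if s ≤ p ∧ s ≤ α p then (1 : ℝ) else 0)
        (fun s _ => by positivity) (Finset.mem_univ (⊥ : L))
      simpa using this
    have hsum : (∑ _p : L, (1 : ℝ)) = ∑ p : L, (∑ s : L, if s ≤ p ∧ s ≤ α p then (1 : ℝ) else 0) := by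
      rw [htr']; simp
    have := (Finset.sum_eq_sum_iff_of_le hle).mp hsum
    intro p
    simpa using (this p (Finset.mem_univ p)).symm
  refine ⟨fun p q hpq => ?_, hinv, fun p => ?_⟩
  · exact (hiff q (α p)).mpr (by rw [hinv]; exact hpq)
  · have hcard : (Finset.univ.filter fun s : L => s ≤ p ∧ s ≤ α p).card = 1 := by
      have h := hone p
      rw [Finset.sum_boole] at h
      exact_mod_cast h
    obtain ⟨a, ha⟩ := Finset.card_eq_one.mp hcard
    have hbot : (⊥ : L) ∈ Finset.univ.filter fun s : L => s ≤ p ∧ s ≤ α p := by simp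
    have hm : p ⊓ α p ∈ Finset.univ.filter fun s : L => s ≤ p ∧ s ≤ α p := by
      simp [inf_le_left, inf_le_right]
    rw [ha, Finset.mem_singleton] at hbot hm
    rw [hm, ← hbot]
end

section
/- A zero-one matrix A (entries in {0,1}) belongs to the polytope of precomplements P of a finite bounded lattice L if and only if A is the permutation matrix of a complementation on L. -/
open Matrix Finset

private lemma sum_indicator_mul {L : Type*} [Fintype L] [DecidableEq L] (a : L) (c : L → ℝ) :
    ∑ r, (if r = a then (1:ℝ) else 0) * c r = c a := by
  simp [ite_mul]

private lemma sum_mul_indicator {L : Type*} [Fintype L] [DecidableEq L] (a : L) (c : L → ℝ) :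
    ∑ r, c r * (if r = a then (1:ℝ) else 0) = c a := by
  simp [mul_ite]

private lemma ite_eq_ite_iff' (P Q : Prop) [Decidable P] [Decidable Q] :
    ((if P then (1:ℝ) else 0) = if Q then 1 else 0) ↔ (P ↔ Q) := by
  by_cases hP : P <;> by_cases hQ : Q <;> simp [hP, hQ]

/-- Zero-one matrices in the polytope of precomplements are exactly the permutation
matrices of complementations. -/
theorem zero_one_matrix_mem_polytope_iff {L : Type*} [Fintype L] [DecidableEq L] [Lattice L]
    [BoundedOrder L] [DecidableRel ((· ≤ ·) : L → L → Prop)] (A : Matrix L L ℝ)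
    (h01 : ∀ p q : L, A p q = 0 ∨ A p q = 1) :
    ((∀ p q : L, 0 ≤ A p q) ∧ Aᵀ = A ∧ (A *ᵥ (fun _ => 1) = fun _ => 1) ∧
      (A * (Matrix.of fun p q : L => if p ≤ q then (1 : ℝ) else 0) =
        (Matrix.of fun p q : L => if p ≤ q then (1 : ℝ) else 0)ᵀ * A) ∧
      Matrix.trace
        ((Matrix.of fun p q : L => if p ≤ q then (1 : ℝ) else 0)ᵀ *
         (Matrix.of fun p q : L => if p ≤ q then (1 : ℝ) else 0) * A) =
        (Fintype.card L : ℝ)) ↔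
    ∃ α : L → L, (∀ p, α (α p) = p) ∧ (∀ p q : L, p ≤ q → α q ≤ α p) ∧
      (∀ p : L, p ⊓ α p = ⊥) ∧ (∀ p : L, p ⊔ α p = ⊤) ∧
      A = Matrix.of fun p q : L => if q = α p then (1 : ℝ) else 0 := by
  constructor
  · rintro ⟨hpos, hsym, hrow, hcomm, htr⟩
    -- row sums equal 1
    have hsum : ∀ p : L, ∑ q, A p q = 1 := by
      intro p
      have := congrFun hrow p
      simpa [Matrix.mulVec, dotProduct] using this
    have hcard : ∀ p : L, (Finset.univ.filter fun q => A p q = 1).card = 1 := by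
      intro p
      have h1 : ∑ q, A p q = ((Finset.univ.filter fun q => A p q = 1).card : ℝ) := by
        rw [Finset.card_filter]
        push_cast
        refine Finset.sum_congr rfl fun q _ => ?_
        rcases h01 p q with h | h <;> simp [h]
      have := hsum p
      rw [h1] at this
      exact_mod_cast this
    have hex : ∀ p : L, ∃ a : L, (Finset.univ.filter fun q => A p q = 1) = {a} :=
      fun p => Finset.card_eq_one.mp (hcard p)
    choose α hα using hex
    have keyA : ∀ p q : L, A p q = if q = α p then 1 else 0 := by
      intro p q
      have hmem : A p q = 1 ↔ q = α p := by
        constructor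
        · intro h
          have hq : q ∈ (Finset.univ.filter fun q => A p q = 1) := by simp [h]
          rw [hα p] at hq
          simpa using hq
        · intro h
          have hq : q ∈ ({α p} : Finset L) := by simp [h]
          rw [← hα p] at hq
          simpa using hq
      rcases h01 p q with h | h
      · have hne : ¬ q = α p := fun hq => by
          rw [hmem.mpr hq] at h; exact one_ne_zero h
        simp [h, hne]
      · rw [h, if_pos (hmem.mp h)]
    have hAsym : ∀ p q : L, A p q = A q p := by
      intro p q
      have := congrFun (congrFun hsym q) p
      simpa [Matrix.transpose_apply] using this
    have hinv : ∀ p : L, α (α p) = p := by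
      intro p
      have h1 : A (α p) p = 1 := by
        rw [← hAsym p (α p), keyA]
        simp
      have h2 := keyA (α p) p
      rw [h1] at h2
      by_contra hne
      have : ¬ p = α (α p) := fun e => hne e.symm
      rw [if_neg this] at h2
      exact one_ne_zero h2
    have keyA' : ∀ p q : L, A p q = if p = α q then 1 else 0 := by
      intro p q
      rw [hAsym p q, keyA]
    have hiff : ∀ p q : L, α p ≤ q ↔ α q ≤ p := by
      intro p q
      have h := congrFun (congrFun hcomm p) q
      rw [Matrix.mul_apply, Matrix.mul_apply] at h
      have hL : ∑ r, A p r * (Matrix.of fun p q : L => if p ≤ q then (1:ℝ) else 0) r q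
          = if α p ≤ q then 1 else 0 := by
        simp only [keyA, Matrix.of_apply]
        exact sum_indicator_mul (α p) _
      have hR : ∑ r, (Matrix.of fun p q : L => if p ≤ q then (1:ℝ) else 0)ᵀ p r * A r q
          = if α q ≤ p then 1 else 0 := by
        simp only [Matrix.transpose_apply, Matrix.of_apply, keyA]
        have hc : ∀ r : L, (if q = α r then (1:ℝ) else 0) = if r = α q then 1 else 0 := by
          intro r
          have : (q = α r) ↔ (r = α q) :=
            ⟨fun h => by rw [h, hinv], fun h => by rw [h, hinv]⟩
          simp only [this]
        simp_rw [hc]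
        exact sum_mul_indicator (α q) _
      rw [hL, hR] at h
      exact (ite_eq_ite_iff' _ _).mp h
    have hanti : ∀ p q : L, p ≤ q → α q ≤ α p := by
      intro p q hpq
      have h := hiff (α p) q
      rw [hinv] at h
      exact h.mp hpq
    -- trace computation
    have htrace :
        Matrix.trace
          ((Matrix.of fun p q : L => if p ≤ q then (1 : ℝ) else 0)ᵀ *
           (Matrix.of fun p q : L => if p ≤ q then (1 : ℝ) else 0) * A)
        = ∑ p : L, ∑ s : L, (if s ≤ p ⊓ α p then (1:ℝ) else 0) := by
      rw [Matrix.trace]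
      refine Finset.sum_congr rfl fun p _ => ?_
      rw [Matrix.diag_apply, Matrix.mul_apply]
      have hstep : ∀ r : L, A r p = if r = α p then (1:ℝ) else 0 := fun r => keyA' r p
      simp_rw [hstep]
      rw [sum_mul_indicator]
      rw [Matrix.mul_apply]
      simp only [Matrix.transpose_apply, Matrix.of_apply]
      refine Finset.sum_congr rfl fun s _ => ?_
      by_cases h1 : s ≤ p <;> by_cases h2 : s ≤ α p <;>
        simp [h1, h2, le_inf_iff]
    have hT : ∑ p : L, ∑ s : L, (if s ≤ p ⊓ α p then (1:ℝ) else 0) = (Fintype.card L : ℝ) := by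
      rw [← htrace]; exact htr
    have hge : ∀ p : L, (1:ℝ) ≤ ∑ s : L, (if s ≤ p ⊓ α p then (1:ℝ) else 0) := by
      intro p
      have := Finset.single_le_sum (f := fun s => if s ≤ p ⊓ α p then (1:ℝ) else 0)
        (fun s _ => by positivity) (Finset.mem_univ (⊥ : L))
      simpa using this
    have hz : ∀ p : L, ∑ s : L, (if s ≤ p ⊓ α p then (1:ℝ) else 0) = 1 := by
      have hsub : ∑ p : L, ((∑ s : L, (if s ≤ p ⊓ α p then (1:ℝ) else 0)) - 1) = 0 := by
        rw [Finset.sum_sub_distrib, hT]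
        simp [Finset.card_univ]
      rw [Finset.sum_eq_zero_iff_of_nonneg (fun p _ => by linarith [hge p])] at hsub
      intro p
      have := hsub p (Finset.mem_univ p)
      linarith
    have hmeet : ∀ p : L, p ⊓ α p = ⊥ := by
      intro p
      by_contra hne
      have hs := Finset.sum_le_sum_of_subset_of_nonneg
        (Finset.subset_univ ({⊥, p ⊓ α p} : Finset L))
        (f := fun s => if s ≤ p ⊓ α p then (1:ℝ) else 0)
        (fun s _ _ => by positivity)
      rw [Finset.sum_pair (fun h => hne h.symm)] at hs
      have hb1 : (if (⊥:L) ≤ p ⊓ α p then (1:ℝ) else 0) = 1 := by simp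
      have hb2 : (if p ⊓ α p ≤ p ⊓ α p then (1:ℝ) else 0) = 1 := by simp
      rw [hb1, hb2] at hs
      linarith [hz p]
    have htop : α ⊥ = (⊤ : L) := by
      refine le_antisymm le_top ?_
      have := hanti ⊥ (α ⊤) bot_le
      rwa [hinv] at this
    have hjoin : ∀ p : L, p ⊔ α p = ⊤ := by
      intro p
      have h1 : α (p ⊔ α p) ≤ α p := hanti p (p ⊔ α p) le_sup_left
      have h2 : α (p ⊔ α p) ≤ p := by
        have := hanti (α p) (p ⊔ α p) le_sup_right
        rwa [hinv] at this
      have h3 : α (p ⊔ α p) = ⊥ := by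
        have : α (p ⊔ α p) ≤ p ⊓ α p := le_inf h2 h1
        rw [hmeet p] at this
        exact le_bot_iff.mp this
      have h4 := congrArg α h3
      rwa [hinv, htop] at h4
    exact ⟨α, hinv, hanti, hmeet, hjoin, by ext p q; simp [keyA]⟩
  · rintro ⟨α, hinv, hanti, hmeet, _hjoin, rfl⟩
    have hiff : ∀ p q : L, α p ≤ q ↔ α q ≤ p := by
      intro p q
      constructor
      · intro h
        have := hanti (α p) q h
        rwa [hinv] at this
      · intro h
        have := hanti (α q) p h
        rwa [hinv] at this
    refine ⟨?_, ?_, ?_, ?_, ?_⟩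
    · intro p q
      simp only [Matrix.of_apply]
      split <;> norm_num
    · ext p q
      simp only [Matrix.transpose_apply, Matrix.of_apply]
      have : (p = α q) ↔ (q = α p) :=
        ⟨fun h => by rw [h, hinv], fun h => by rw [h, hinv]⟩
      simp only [this]
    · funext p
      simp [Matrix.mulVec, dotProduct]
    · ext p q
      rw [Matrix.mul_apply, Matrix.mul_apply]
      have hL : ∑ r, (Matrix.of fun p q : L => if q = α p then (1:ℝ) else 0) p r *
          (Matrix.of fun p q : L => if p ≤ q then (1:ℝ) else 0) r q
          = if α p ≤ q then 1 else 0 := by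
        simp only [Matrix.of_apply]
        exact sum_indicator_mul (α p) _
      have hR : ∑ r, (Matrix.of fun p q : L => if p ≤ q then (1:ℝ) else 0)ᵀ p r *
          (Matrix.of fun p q : L => if q = α p then (1:ℝ) else 0) r q
          = if α q ≤ p then 1 else 0 := by
        simp only [Matrix.transpose_apply, Matrix.of_apply]
        have hc : ∀ r : L, (if q = α r then (1:ℝ) else 0) = if r = α q then 1 else 0 := by
          intro r
          have : (q = α r) ↔ (r = α q) :=
            ⟨fun h => by rw [h, hinv], fun h => by rw [h, hinv]⟩
          simp only [this]
        simp_rw [hc]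
        exact sum_mul_indicator (α q) _
      rw [hL, hR]
      exact (ite_eq_ite_iff' _ _).mpr (hiff p q)
    · rw [Matrix.trace]
      have hdiag : ∀ p : L,
          ((Matrix.of fun p q : L => if p ≤ q then (1 : ℝ) else 0)ᵀ *
           (Matrix.of fun p q : L => if p ≤ q then (1 : ℝ) else 0) *
           (Matrix.of fun p q : L => if q = α p then (1 : ℝ) else 0)) p p = 1 := by
        intro p
        rw [Matrix.mul_apply]
        have hc : ∀ r : L,
            (Matrix.of fun p q : L => if q = α p then (1 : ℝ) else 0) r p
            = if r = α p then 1 else 0 := by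
          intro r
          simp only [Matrix.of_apply]
          have : (p = α r) ↔ (r = α p) :=
            ⟨fun h => by rw [h, hinv], fun h => by rw [h, hinv]⟩
          simp only [this]
        simp_rw [hc]
        rw [sum_mul_indicator]
        rw [Matrix.mul_apply]
        simp only [Matrix.transpose_apply, Matrix.of_apply]
        have hs : ∀ s : L,
            (if s ≤ p then (1:ℝ) else 0) * (if s ≤ α p then 1 else 0)
            = if s = ⊥ then 1 else 0 := by
          intro s
          have hb : (s ≤ p ∧ s ≤ α p) ↔ s = ⊥ := by
            rw [← le_inf_iff, hmeet p, le_bot_iff]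
          by_cases h1 : s ≤ p <;> by_cases h2 : s ≤ α p <;>
            simp [h1, h2, ← hb]
        simp_rw [hs]
        simp
      simp only [Matrix.diag_apply]
      simp_rw [hdiag]
      simp [Finset.card_univ]
end

section
/- For every matrix A in the feasible region {A : A·𝟙 = 𝟙, Aᵀ = A, Aζ = ζᵀA, A ≥ 0}, the objective trace(ζζᵀ A) satisfies trace(ζζᵀ A) ≥ n; hence permutation matrices of complementations (which achieve value n) are optimal solutions of the linear program minimizing trace(ζζᵀ A) over this region. -/
open Matrix

section Aux

variable {L : Type*} [Fintype L] [DecidableEq L] [Lattice L]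
    [BoundedOrder L] [DecidableRel ((· ≤ ·) : L → L → Prop)]

lemma zzt_entry (p q : L) :
    ((Matrix.of fun p q : L => if p ≤ q then (1 : ℝ) else 0) *
     (Matrix.of fun p q : L => if p ≤ q then (1 : ℝ) else 0)ᵀ) p q =
    ∑ r : L, (if p ≤ r then (1:ℝ) else 0) * (if q ≤ r then (1:ℝ) else 0) := by
  simp [Matrix.mul_apply, Matrix.transpose_apply]

lemma zzt_ge_one (p q : L) :
    (1:ℝ) ≤ ((Matrix.of fun p q : L => if p ≤ q then (1 : ℝ) else 0) *
     (Matrix.of fun p q : L => if p ≤ q then (1 : ℝ) else 0)ᵀ) p q := by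
  rw [zzt_entry]
  have h : ((if p ≤ (⊤:L) then (1:ℝ) else 0) * (if q ≤ (⊤:L) then (1:ℝ) else 0)) = 1 := by
    simp
  refine le_trans (le_of_eq h.symm) ?_
  exact Finset.single_le_sum (f := fun r : L => (if p ≤ r then (1:ℝ) else 0) * (if q ≤ r then (1:ℝ) else 0)) (fun r _ => by positivity) (Finset.mem_univ ⊤)

end Aux

/-- Every feasible matrix has objective value trace(ζζᵀA) ≥ n, and permutation matrices of
complementations achieve the value n, hence are optimal. -/
theorem complementations_optimal {L : Type*} [Fintype L] [DecidableEq L] [Lattice L]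
    [BoundedOrder L] [DecidableRel ((· ≤ ·) : L → L → Prop)] :
    (∀ A : Matrix L L ℝ,
      (A *ᵥ (fun _ => 1) = fun _ => 1) → Aᵀ = A →
      (A * (Matrix.of fun p q : L => if p ≤ q then (1 : ℝ) else 0) =
        (Matrix.of fun p q : L => if p ≤ q then (1 : ℝ) else 0)ᵀ * A) →
      (∀ p q : L, 0 ≤ A p q) →
      (Fintype.card L : ℝ) ≤ Matrix.trace
        ((Matrix.of fun p q : L => if p ≤ q then (1 : ℝ) else 0) *
         (Matrix.of fun p q : L => if p ≤ q then (1 : ℝ) else 0)ᵀ * A)) ∧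
    (∀ α : L → L, (∀ p, α (α p) = p) → (∀ p q : L, p ≤ q → α q ≤ α p) →
      (∀ p : L, p ⊓ α p = ⊥) → (∀ p : L, p ⊔ α p = ⊤) →
      Matrix.trace
        ((Matrix.of fun p q : L => if p ≤ q then (1 : ℝ) else 0) *
         (Matrix.of fun p q : L => if p ≤ q then (1 : ℝ) else 0)ᵀ *
         (Matrix.of fun p q : L => if q = α p then (1 : ℝ) else 0)) =
        (Fintype.card L : ℝ)) := by
  set ζ : Matrix L L ℝ := Matrix.of fun p q : L => if p ≤ q then (1 : ℝ) else 0 with hζ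
  constructor
  · intro A hrow _ _ hpos
    have htr : Matrix.trace (ζ * ζᵀ * A) = ∑ p : L, ∑ q : L, (ζ * ζᵀ) p q * A q p := by
      simp [Matrix.trace, Matrix.diag, Matrix.mul_apply]
    rw [htr]
    have hsum : (Fintype.card L : ℝ) = ∑ p : L, ∑ q : L, A q p := by
      rw [Finset.sum_comm]
      have : ∀ q : L, ∑ p : L, A q p = 1 := by
        intro q
        have := congrFun hrow q
        simpa [Matrix.mulVec, dotProduct] using this
      simp [this]
    rw [hsum]
    refine Finset.sum_le_sum fun p _ => Finset.sum_le_sum fun q _ => ?_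
    have h1 := zzt_ge_one (L := L) p q
    nlinarith [hpos q p]
  · intro α hinv _ _ hsup
    have htr : Matrix.trace (ζ * ζᵀ * Matrix.of fun p q : L => if q = α p then (1 : ℝ) else 0)
        = ∑ p : L, ∑ q : L, (ζ * ζᵀ) p q * (if p = α q then (1:ℝ) else 0) := by
      simp [Matrix.trace, Matrix.diag, Matrix.mul_apply]
    rw [htr]
    have hdiag : ∀ p : L, ∑ q : L, (ζ * ζᵀ) p q * (if p = α q then (1:ℝ) else 0)
        = (ζ * ζᵀ) p (α p) := by
      intro p
      rw [Finset.sum_eq_single (α p)]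
      · simp [hinv]
      · intro q _ hq
        have : p ≠ α q := fun h => hq (by rw [h, hinv])
        simp [this]
      · simp
    have hval : ∀ p : L, (ζ * ζᵀ) p (α p) = 1 := by
      intro p
      rw [hζ, zzt_entry]
      rw [Finset.sum_eq_single (⊤ : L)]
      · simp
      · intro r _ hr
        have : ¬ (p ≤ r ∧ α p ≤ r) := by
          rintro ⟨h1, h2⟩
          exact hr (top_le_iff.mp (hsup p ▸ sup_le h1 h2))
        rcases Decidable.em (p ≤ r) with h | h
        · have h2 : ¬ α p ≤ r := fun h2 => this ⟨h, h2⟩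
          simp [h, h2]
        · simp [h]
      · simp
    have : (∑ p : L, ∑ q : L, (ζ * ζᵀ) p q * (if p = α q then (1:ℝ) else 0)) = ∑ _p : L, (1:ℝ) :=
      Finset.sum_congr rfl fun p _ => (hdiag p).trans (hval p)
    rw [this]
    simp
end

section
/- If A is a nonnegative real matrix indexed by a finite bounded lattice with A·𝟙 = 𝟙 and trace(ζᵀζ A) = n, then A(p,q) = 0 for every pair p, q with p ∧ q ≠ 0. -/
open Matrix

/-- If A is nonnegative, row-stochastic, and trace(ζᵀζA) = n, then A vanishes on
non-disjoint pairs. -/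
theorem entries_vanish_of_trace_eq {L : Type*} [Fintype L] [DecidableEq L] [Lattice L]
    [BoundedOrder L] [DecidableRel ((· ≤ ·) : L → L → Prop)] (A : Matrix L L ℝ)
    (hA : ∀ p q : L, 0 ≤ A p q)
    (hrow : A *ᵥ (fun _ => 1) = fun _ => 1)
    (htr : Matrix.trace
        ((Matrix.of fun p q : L => if p ≤ q then (1 : ℝ) else 0)ᵀ *
         (Matrix.of fun p q : L => if p ≤ q then (1 : ℝ) else 0) * A) =
        (Fintype.card L : ℝ)) :
    ∀ p q : L, p ⊓ q ≠ ⊥ → A p q = 0 := by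
  set Z : Matrix L L ℝ := Matrix.of fun p q : L => if p ≤ q then (1 : ℝ) else 0 with hZ
  set c : L → L → ℕ := fun a b => (Finset.univ.filter (fun r => r ≤ a ∧ r ≤ b)).card with hc
  have hS : ∀ a b : L, (Zᵀ * Z) a b = (c a b : ℝ) := by
    intro a b
    simp only [Matrix.mul_apply, Matrix.transpose_apply, hZ, Matrix.of_apply, hc]
    rw [Finset.card_filter]
    push_cast
    refine Finset.sum_congr rfl fun r _ => ?_
    by_cases h1 : r ≤ a <;> by_cases h2 : r ≤ b <;> simp [h1, h2]
  have htrace : ∑ a : L, ∑ b : L, (c a b : ℝ) * A b a = (Fintype.card L : ℝ) := by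
    rw [← htr, Matrix.trace]
    simp only [Matrix.diag]
    refine (Finset.sum_congr rfl fun a _ => ?_).symm
    rw [Matrix.mul_apply]
    exact Finset.sum_congr rfl fun b _ => by rw [hS]
  have hrowsum : ∀ b : L, ∑ a : L, A b a = 1 := by
    intro b
    have := congrFun hrow b
    simpa [Matrix.mulVec, dotProduct] using this
  have hsumA : ∑ a : L, ∑ b : L, A b a = (Fintype.card L : ℝ) := by
    rw [Finset.sum_comm]
    simp [hrowsum]
  have hzero : ∑ a : L, ∑ b : L, ((c a b : ℝ) - 1) * A b a = 0 := by
    have : ∑ a : L, ∑ b : L, ((c a b : ℝ) - 1) * A b a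
        = (∑ a : L, ∑ b : L, (c a b : ℝ) * A b a) - ∑ a : L, ∑ b : L, A b a := by
      rw [← Finset.sum_sub_distrib]
      refine Finset.sum_congr rfl fun a _ => ?_
      rw [← Finset.sum_sub_distrib]
      refine Finset.sum_congr rfl fun b _ => by ring
    rw [this, htrace, hsumA, sub_self]
  have hone : ∀ a b : L, 1 ≤ c a b := by
    intro a b
    exact Finset.card_pos.mpr ⟨⊥, by simp⟩
  have hnonneg : ∀ a b : L, 0 ≤ ((c a b : ℝ) - 1) * A b a := by
    intro a b
    apply mul_nonneg _ (hA b a)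
    have := hone a b
    simp only [sub_nonneg]
    exact_mod_cast this
  have hterm : ∀ a b : L, ((c a b : ℝ) - 1) * A b a = 0 := by
    intro a b
    have h1 : ∀ a ∈ Finset.univ, (0:ℝ) ≤ ∑ b : L, ((c a b : ℝ) - 1) * A b a :=
      fun a _ => Finset.sum_nonneg fun b _ => hnonneg a b
    have h2 := (Finset.sum_eq_zero_iff_of_nonneg h1).mp hzero a (Finset.mem_univ a)
    exact (Finset.sum_eq_zero_iff_of_nonneg (fun b _ => hnonneg a b)).mp h2 b (Finset.mem_univ b)
  intro p q hpq
  have htwo : 2 ≤ c q p := by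
    have hsub : ({⊥, p ⊓ q} : Finset L) ⊆ Finset.univ.filter (fun r => r ≤ q ∧ r ≤ p) := by
      intro r hr
      simp only [Finset.mem_insert, Finset.mem_singleton] at hr
      rcases hr with rfl | rfl <;> simp [inf_le_left, inf_le_right]
    have hcard : ({⊥, p ⊓ q} : Finset L).card = 2 := by
      rw [Finset.card_insert_of_notMem (by simpa using (Ne.symm hpq)), Finset.card_singleton]
    calc 2 = ({⊥, p ⊓ q} : Finset L).card := hcard.symm
      _ ≤ _ := Finset.card_le_card hsub
  have := hterm q p
  have hpos : (0:ℝ) < (c q p : ℝ) - 1 := by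
    have : (2:ℝ) ≤ (c q p : ℝ) := by exact_mod_cast htwo
    linarith
  rcases mul_eq_zero.mp this with h | h
  · exact absurd h (ne_of_gt hpos)
  · exact h
end

section
/- Let A be a permutation matrix of a bijection α on a finite bounded lattice such that trace(ζᵀζ A) = n. Then p ∧ α(p) = 0 for all p ∈ L. -/
open Matrix Finset

/-- If the permutation matrix of a bijection α satisfies trace(ζᵀζA) = n, then
p ⊓ α p = ⊥ for all p. -/
theorem disjoint_of_trace_eq {L : Type*} [Fintype L] [DecidableEq L] [Lattice L]
    [BoundedOrder L] [DecidableRel ((· ≤ ·) : L → L → Prop)] (α : L → L)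
    (hbij : Function.Bijective α)
    (htr : Matrix.trace
        ((Matrix.of fun p q : L => if p ≤ q then (1 : ℝ) else 0)ᵀ *
         (Matrix.of fun p q : L => if p ≤ q then (1 : ℝ) else 0) *
         (Matrix.of fun p q : L => if q = α p then (1 : ℝ) else 0)) =
        (Fintype.card L : ℝ)) :
    ∀ p : L, p ⊓ α p = ⊥ := by
  set ζ : Matrix L L ℝ := Matrix.of fun p q : L => if p ≤ q then (1 : ℝ) else 0 with hζ
  set A : Matrix L L ℝ := Matrix.of fun p q : L => if q = α p then (1 : ℝ) else 0 with hA
  have key : Matrix.trace (ζᵀ * ζ * A)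
      = ∑ p : L, ((Finset.univ.filter (fun r => r ≤ p ∧ r ≤ α p)).card : ℝ) := by
    rw [Matrix.trace_mul_comm, Matrix.trace]
    refine Finset.sum_congr rfl fun p _ => ?_
    rw [Matrix.diag_apply, Matrix.mul_apply]
    rw [Finset.sum_eq_single (α p)]
    · rw [Matrix.mul_apply]
      simp only [hA, hζ, Matrix.transpose_apply, Matrix.of_apply, if_pos rfl, one_mul]
      rw [Finset.card_filter, Nat.cast_sum, if_pos trivial, one_mul]
      refine Finset.sum_congr rfl fun r _ => ?_
      by_cases h1 : r ≤ α p <;> by_cases h2 : r ≤ p <;> simp [h1, h2]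
    · intro b _ hb
      simp [hA, hb]
    · simp
  rw [key] at htr
  have hnat : ∑ p : L, (Finset.univ.filter (fun r => r ≤ p ∧ r ≤ α p)).card
      = Fintype.card L := by exact_mod_cast htr
  have hle : ∀ p ∈ (Finset.univ : Finset L),
      1 ≤ (Finset.univ.filter (fun r => r ≤ p ∧ r ≤ α p)).card := fun p _ =>
    Finset.card_pos.mpr ⟨⊥, by simp⟩
  have hone : ∀ p ∈ (Finset.univ : Finset L),
      1 = (Finset.univ.filter (fun r => r ≤ p ∧ r ≤ α p)).card := by
    refine (Finset.sum_eq_sum_iff_of_le hle).mp ?_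
    simp [hnat, Finset.card_univ]
  intro p
  have h1 : (⊥ : L) ∈ Finset.univ.filter (fun r => r ≤ p ∧ r ≤ α p) := by simp
  have h2 : p ⊓ α p ∈ Finset.univ.filter (fun r => r ≤ p ∧ r ≤ α p) := by
    simp [inf_le_left, inf_le_right]
  exact Finset.card_le_one.mp (le_of_eq (hone p (Finset.mem_univ p)).symm) _ h2 _ h1
end

section
/- A finite bounded lattice L admits a complementation (an order-reversing involution α with p ∧ α(p) = 0 and p ∨ α(p) = 1 for all p) if and only if the polytope of precomplements P contains a matrix with all entries in {0,1}. -/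
open Matrix

set_option linter.unusedSectionVars false

section Aux

variable {L : Type*} [Fintype L] [DecidableEq L] [Lattice L] [BoundedOrder L]
  [DecidableRel ((· ≤ ·) : L → L → Prop)]

/-- Two 0/1 indicators are equal iff the conditions are equivalent. -/
lemma aux_ite_one_zero_eq_iff {c1 c2 : Prop} [Decidable c1] [Decidable c2] :
    ((if c1 then (1 : ℝ) else 0) = (if c2 then 1 else 0)) ↔ (c1 ↔ c2) := by
  by_cases h1 : c1 <;> by_cases h2 : c2 <;> simp [h1, h2]

lemma aux_mul_zeta {A : Matrix L L ℝ} (f : L → L)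
    (hA : ∀ p q, A p q = if q = f p then 1 else 0) (p q : L) :
    (A * (Matrix.of fun p q : L => if p ≤ q then (1 : ℝ) else 0)) p q
      = if f p ≤ q then 1 else 0 := by
  rw [Matrix.mul_apply]
  simp only [hA, Matrix.of_apply, ite_mul, one_mul, zero_mul]
  simp [Finset.sum_ite_eq']

lemma aux_zetaT_mul {A : Matrix L L ℝ} (f : L → L)
    (hinv : ∀ p, f (f p) = p)
    (hA : ∀ p q, A p q = if q = f p then 1 else 0) (p q : L) :
    ((Matrix.of fun p q : L => if p ≤ q then (1 : ℝ) else 0)ᵀ * A) p q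
      = if f q ≤ p then 1 else 0 := by
  rw [Matrix.mul_apply]
  have hiff : ∀ r : L, (q = f r) ↔ (r = f q) := by
    intro r
    constructor
    · intro h; rw [h, hinv]
    · intro h; rw [h, hinv]
  simp only [hA, Matrix.transpose_apply, Matrix.of_apply]
  have : ∀ r : L, (if r ≤ p then (1:ℝ) else 0) * (if q = f r then 1 else 0)
      = if r = f q then (if r ≤ p then (1:ℝ) else 0) else 0 := by
    intro r
    rw [if_congr (hiff r) rfl rfl, mul_ite, mul_one, mul_zero]
  simp only [this]
  simp [Finset.sum_ite_eq']

lemma aux_trace {A : Matrix L L ℝ} (f : L → L)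
    (hinv : ∀ p, f (f p) = p)
    (hA : ∀ p q, A p q = if q = f p then 1 else 0) :
    Matrix.trace
        ((Matrix.of fun p q : L => if p ≤ q then (1 : ℝ) else 0)ᵀ *
         (Matrix.of fun p q : L => if p ≤ q then (1 : ℝ) else 0) * A)
      = ∑ p : L, ((Finset.univ.filter (fun r : L => r ≤ p ⊓ f p)).card : ℝ) := by
  rw [Matrix.trace]
  apply Finset.sum_congr rfl
  intro p _
  rw [Matrix.diag_apply, Matrix.mul_apply]
  have hpick : ∀ s : L, (p = f s) ↔ (s = f p) := by
    intro s; constructor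
    · intro h; rw [h, hinv]
    · intro h; rw [h, hinv]
  have h1 : ∀ s : L,
      ((Matrix.of fun p q : L => if p ≤ q then (1 : ℝ) else 0)ᵀ *
        (Matrix.of fun p q : L => if p ≤ q then (1 : ℝ) else 0)) p s * A s p
      = if s = f p then
          ((Matrix.of fun p q : L => if p ≤ q then (1 : ℝ) else 0)ᵀ *
            (Matrix.of fun p q : L => if p ≤ q then (1 : ℝ) else 0)) p s else 0 := by
    intro s
    rw [hA, if_congr (hpick s) rfl rfl, mul_ite, mul_one, mul_zero]
  simp only [h1]
  rw [Finset.sum_ite_eq' Finset.univ (f p)]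
  simp only [Finset.mem_univ, if_true]
  rw [Matrix.mul_apply]
  have h2 : ∀ r : L, (Matrix.of fun p q : L => if p ≤ q then (1 : ℝ) else 0)ᵀ p r *
      (Matrix.of fun p q : L => if p ≤ q then (1 : ℝ) else 0) r (f p)
      = if r ≤ p ⊓ f p then 1 else 0 := by
    intro r
    simp only [Matrix.transpose_apply, Matrix.of_apply]
    by_cases h1 : r ≤ p <;> by_cases h2 : r ≤ f p <;>
      simp [h1, h2, le_inf_iff]
  simp only [h2]
  rw [Finset.sum_boole]

/-- antitone involution with the swap property maps inf to sup -/
lemma aux_f_inf {f : L → L} (hinv : ∀ p, f (f p) = p)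
    (hswap : ∀ p q : L, f p ≤ q ↔ f q ≤ p) (a b : L) :
    f (a ⊓ b) = f a ⊔ f b := by
  have hanti : ∀ p q : L, p ≤ q → f q ≤ f p := by
    intro p q h
    rw [hswap q (f p), hinv]
    exact h
  apply le_antisymm
  · rw [hswap (a ⊓ b) (f a ⊔ f b)]
    apply le_inf
    · calc f (f a ⊔ f b) ≤ f (f a) := hanti _ _ le_sup_left
        _ = a := hinv a
    · calc f (f a ⊔ f b) ≤ f (f b) := hanti _ _ le_sup_right
        _ = b := hinv b
  · exact sup_le (hanti _ _ inf_le_left) (hanti _ _ inf_le_right)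

end Aux

/-- A finite bounded lattice admits a complementation iff the polytope of precomplements
contains a zero-one matrix. -/
theorem exists_complementation_iff_polytope_has_zero_one {L : Type*} [Fintype L]
    [DecidableEq L] [Lattice L] [BoundedOrder L]
    [DecidableRel ((· ≤ ·) : L → L → Prop)] :
    (∃ α : L → L, (∀ p, α (α p) = p) ∧ (∀ p q : L, p ≤ q → α q ≤ α p) ∧
      (∀ p : L, p ⊓ α p = ⊥) ∧ (∀ p : L, p ⊔ α p = ⊤)) ↔
    (∃ A : Matrix L L ℝ, (∀ p q : L, A p q = 0 ∨ A p q = 1) ∧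
      (∀ p q : L, 0 ≤ A p q) ∧ Aᵀ = A ∧ (A *ᵥ (fun _ => 1) = fun _ => 1) ∧
      (A * (Matrix.of fun p q : L => if p ≤ q then (1 : ℝ) else 0) =
        (Matrix.of fun p q : L => if p ≤ q then (1 : ℝ) else 0)ᵀ * A) ∧
      Matrix.trace
        ((Matrix.of fun p q : L => if p ≤ q then (1 : ℝ) else 0)ᵀ *
         (Matrix.of fun p q : L => if p ≤ q then (1 : ℝ) else 0) * A) =
        (Fintype.card L : ℝ)) := by
  constructor
  · rintro ⟨α, hinv, hanti, hmeet, hsup⟩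
    refine ⟨Matrix.of fun p q : L => if q = α p then 1 else 0, ?_, ?_, ?_, ?_, ?_, ?_⟩
    · intro p q; by_cases h : q = α p <;> simp [h]
    · intro p q; by_cases h : q = α p <;> simp [h]
    · ext p q
      simp only [Matrix.transpose_apply, Matrix.of_apply]
      refine if_congr ⟨fun h => ?_, fun h => ?_⟩ rfl rfl
      · rw [h, hinv]
      · rw [h, hinv]
    · funext p
      simp [Matrix.mulVec, dotProduct, Finset.sum_ite_eq']
    · ext p q
      rw [aux_mul_zeta (A := Matrix.of fun p q : L => if q = α p then 1 else 0) α (fun _ _ => rfl),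
        aux_zetaT_mul (A := Matrix.of fun p q : L => if q = α p then 1 else 0) α hinv (fun _ _ => rfl)]
      refine if_congr ⟨fun h => ?_, fun h => ?_⟩ rfl rfl
      · have := hanti _ _ h; rwa [hinv] at this
      · have := hanti _ _ h; rwa [hinv] at this
    · rw [aux_trace (A := Matrix.of fun p q : L => if q = α p then 1 else 0) α hinv (fun _ _ => rfl)]
      have : ∀ p : L, ((Finset.univ.filter (fun r : L => r ≤ p ⊓ α p)).card : ℝ) = 1 := by
        intro p
        rw [hmeet p]
        have : (Finset.univ.filter (fun r : L => r ≤ (⊥ : L))) = {⊥} := by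
          ext r; simp [le_bot_iff]
        rw [this]
        simp
      simp only [this]
      simp [Finset.card_univ]
  · rintro ⟨A, h01, hnn, hsym, hrow, hcom, htr⟩
    -- row sums
    have hrowsum : ∀ p : L, ∑ q : L, A p q = 1 := by
      intro p
      have := congrFun hrow p
      simpa [Matrix.mulVec, dotProduct] using this
    -- uniqueness of the 1 entry in each row
    have hexu : ∀ p : L, ∃! q : L, A p q = 1 := by
      intro p
      obtain ⟨q, hq⟩ : ∃ q : L, A p q = 1 := by
        by_contra h
        push_neg at h
        have : ∀ q : L, A p q = 0 := by
          intro q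
          rcases h01 p q with h0 | h1
          · exact h0
          · exact absurd h1 (h q)
        have hzero := hrowsum p
        rw [Finset.sum_eq_zero (fun q _ => this q)] at hzero
        norm_num at hzero
      refine ⟨q, hq, fun q' hq' => ?_⟩
      by_contra hne
      have hsub : ({q', q} : Finset L) ⊆ Finset.univ := Finset.subset_univ _
      have h2 : (2 : ℝ) ≤ ∑ r : L, A p r := by
        calc (2 : ℝ) = ∑ r ∈ ({q', q} : Finset L), A p r := by
              rw [Finset.sum_pair hne, hq, hq']; norm_num
          _ ≤ ∑ r : L, A p r :=
              Finset.sum_le_sum_of_subset_of_nonneg hsub (fun i _ _ => hnn p i)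
      rw [hrowsum p] at h2
      norm_num at h2
    set f : L → L := fun p => (hexu p).exists.choose with hf
    have hfspec : ∀ p : L, A p (f p) = 1 := fun p => (hexu p).exists.choose_spec
    have hA : ∀ p q : L, A p q = if q = f p then 1 else 0 := by
      intro p q
      by_cases h : q = f p
      · rw [if_pos h, h, hfspec]
      · rw [if_neg h]
        rcases h01 p q with h0 | h1
        · exact h0
        · exact absurd ((hexu p).unique h1 (hfspec p)) h
    have hinv : ∀ p : L, f (f p) = p := by
      intro p
      have hsymm : A (f p) p = 1 := by
        have := congrFun (congrFun hsym p) (f p)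
        rw [Matrix.transpose_apply] at this
        rw [this, hfspec]
      exact ((hexu (f p)).unique (hfspec (f p)) hsymm)
    have hswap : ∀ p q : L, f p ≤ q ↔ f q ≤ p := by
      intro p q
      have := congrFun (congrFun hcom p) q
      rw [aux_mul_zeta f hA, aux_zetaT_mul f hinv hA] at this
      exact aux_ite_one_zero_eq_iff.mp this
    have hanti : ∀ p q : L, p ≤ q → f q ≤ f p := by
      intro p q h
      rw [hswap q (f p), hinv]
      exact h
    -- meet complement from the trace condition
    have hmeet : ∀ p : L, p ⊓ f p = ⊥ := by
      intro p
      rw [aux_trace f hinv hA] at htr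
      have hone : ∀ p : L, (1 : ℝ) ≤ ((Finset.univ.filter (fun r : L => r ≤ p ⊓ f p)).card : ℝ) := by
        intro p
        have hmem : (⊥ : L) ∈ Finset.univ.filter (fun r : L => r ≤ p ⊓ f p) := by
          simp
        have := Finset.card_pos.mpr ⟨⊥, hmem⟩
        exact_mod_cast this
      have hsum1 : ∑ p : L, (1 : ℝ) = (Fintype.card L : ℝ) := by
        simp [Finset.card_univ]
      have heq : ∀ p ∈ Finset.univ,
          (1 : ℝ) = ((Finset.univ.filter (fun r : L => r ≤ p ⊓ f p)).card : ℝ) := by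
        rw [← Finset.sum_eq_sum_iff_of_le (fun i _ => hone i)]
        rw [hsum1, htr]
      have hcard : (Finset.univ.filter (fun r : L => r ≤ p ⊓ f p)).card = 1 := by
        have := (heq p (Finset.mem_univ p)).symm
        exact_mod_cast this
      have hle := Finset.card_le_one.mp (le_of_eq hcard)
      have hmem1 : (⊥ : L) ∈ Finset.univ.filter (fun r : L => r ≤ p ⊓ f p) := by simp
      have hmem2 : p ⊓ f p ∈ Finset.univ.filter (fun r : L => r ≤ p ⊓ f p) := by simp
      exact hle _ hmem2 _ hmem1
    have hfbot : f ⊥ = ⊤ := by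
      apply le_antisymm le_top
      calc (⊤ : L) = f (f ⊤) := (hinv ⊤).symm
        _ ≤ f ⊥ := hanti _ _ bot_le
    refine ⟨f, hinv, hanti, hmeet, ?_⟩
    intro p
    have : f (f p ⊓ p) = f (f p) ⊔ f p := aux_f_inf hinv hswap (f p) p
    rw [hinv, inf_comm, hmeet, hfbot] at this
    rw [← this]
end
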